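/- arXiv:0706.1677 — 3 statements merged into one kernel-verified Lean document; each statement's English description precedes it below -/
import Mathlib

section
/- Let ω ⊂ ℝ^d be a Delone set with repetitivity function F : [1,∞) → [1,∞), meaning that for every D ≥ 1 and every x ∈ ω, every D-patch of ω occurs as (ω − y) ∩ B_D for some y ∈ ω ∩ B_{F(D)}(x). Then there exists κ > 0 such that card(p_ω(D)) ≤ κ · |B_{F(D)}| for all D ≥ 1, where p_ω(D) = {(−x + ω) ∩ B_D : x ∈ ω} is the set of D-patches and |B_{F(D)}| is the Lebesgue measure of the ball of radius F(D). -/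
open MeasureTheory Filter

noncomputable section

/-- The translate `-x + ξ = {-x + y : y ∈ ξ}`. -/
def transl {d : ℕ} (x : EuclideanSpace ℝ (Fin d)) (ξ : Set (EuclideanSpace ℝ (Fin d))) :
    Set (EuclideanSpace ℝ (Fin d)) := (fun y => y - x) '' ξ

/-- `ξ` is uniformly discrete with packing radius `r`. -/
def UnifDiscrete {d : ℕ} (r : ℝ) (ξ : Set (EuclideanSpace ℝ (Fin d))) : Prop :=
  ∀ x : EuclideanSpace ℝ (Fin d), (ξ ∩ Metric.ball x r).Subsingleton

/-- `ξ` is relatively dense with covering radius `R`. -/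
def RelDense {d : ℕ} (R : ℝ) (ξ : Set (EuclideanSpace ℝ (Fin d))) : Prop :=
  ∀ x : EuclideanSpace ℝ (Fin d), (ξ ∩ Metric.closedBall x R).Nonempty

/-- The set of `D`-patches of `ω`. -/
def patches {d : ℕ} (ω : Set (EuclideanSpace ℝ (Fin d))) (D : ℝ) :
    Set (Set (EuclideanSpace ℝ (Fin d))) :=
  {P | ∃ x ∈ ω, P = transl x ω ∩ Metric.closedBall 0 D}

/-- Finite local complexity. -/
def FLC {d : ℕ} (ω : Set (EuclideanSpace ℝ (Fin d))) : Prop :=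
  ∀ D : ℝ, 0 < D → (patches ω D).Finite

/-- The patch counting entropy of `ω`. -/
def hpc {d : ℕ} (ω : Set (EuclideanSpace ℝ (Fin d))) : ℝ :=
  Filter.limsup (fun n : ℕ =>
    Real.log ((patches ω (n : ℝ)).ncard) /
      (volume (Metric.closedBall (0 : EuclideanSpace ℝ (Fin d)) (n : ℝ))).toReal) atTop

/-- `F` is a repetitivity function for `ω`. -/
def RepetitivityFn {d : ℕ} (ω : Set (EuclideanSpace ℝ (Fin d))) (F : ℝ → ℝ) : Prop :=
  ∀ D : ℝ, 1 ≤ D → ∀ x ∈ ω, ∀ P ∈ patches ω D,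
    ∃ y ∈ ω ∩ Metric.closedBall x (F D), P = transl y ω ∩ Metric.closedBall 0 D

/-!
Fix a point `x` of `ω`. By repetitivity every `D`-patch is the patch of some point of `ω` in the
ball of radius `F D` about `x`, so there are at most as many patches as such points. These points
are `r`-separated, so the balls of radius `r / 2` around them are disjoint and lie in the ball of
radius `F D + r / 2 ≤ (1 + r / 2) F D` about `x`; comparing volumes gives the bound with
`κ = (1 + r / 2) ^ d / |B_{r/2}|`.
-/

open Metric

section Packing

variable {E : Type*} [NormedAddCommGroup E] [MeasurableSpace E] [BorelSpace E]
  (μ : Measure E) [μ.IsAddHaarMeasure] {r ρ : ℝ} {x : E}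

theorem Finset.card_mul_measure_ball_le_of_pairwise_le_dist {T : Finset E}
    (hT : (T : Set E).Pairwise fun p q => r ≤ dist p q) (hTx : (T : Set E) ⊆ closedBall x ρ) :
    T.card * μ (ball 0 (r / 2)) ≤ μ (closedBall x (ρ + r / 2)) := by
  have hdisj : (T : Set E).PairwiseDisjoint fun p => ball p (r / 2) := fun p hp q hq hne =>
    ball_disjoint_ball (by linarith [hT hp hq hne])
  calc (T.card : ENNReal) * μ (ball 0 (r / 2)) = ∑ p ∈ T, μ (ball p (r / 2)) := by
        simp [Measure.addHaar_ball_center μ]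
    _ = μ (⋃ p ∈ T, ball p (r / 2)) :=
        (measure_biUnion_finset hdisj fun _ _ => measurableSet_ball).symm
    _ ≤ μ (closedBall x (ρ + r / 2)) := by
        refine measure_mono <| Set.iUnion₂_subset fun p hp => ball_subset_closedBall.trans <|
          closedBall_subset_closedBall' ?_
        linarith [mem_closedBall.mp (hTx hp)]

theorem Set.Finite.ncard_mul_measure_ball_le_of_pairwise_le_dist {S : Set E} (hSfin : S.Finite)
    (hS : S.Pairwise fun p q => r ≤ dist p q) (hSx : S ⊆ closedBall x ρ) :
    S.ncard * μ (ball 0 (r / 2)) ≤ μ (closedBall x (ρ + r / 2)) := by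
  rw [Set.ncard_eq_toFinset_card S hSfin]
  exact Finset.card_mul_measure_ball_le_of_pairwise_le_dist μ (by simpa using hS)
    (by simpa using hSx)

variable [NormedSpace ℝ E] [FiniteDimensional ℝ E]

theorem Set.Pairwise.finite_of_le_dist_of_subset_closedBall (hr : 0 < r) {S : Set E}
    (hS : S.Pairwise fun p q => r ≤ dist p q) (hSx : S ⊆ closedBall x ρ) : S.Finite := by
  by_contra hinf
  obtain ⟨μ, _⟩ : ∃ μ : Measure E, μ.IsAddHaarMeasure := ⟨Measure.addHaar, inferInstance⟩
  have hc : μ (ball 0 (r / 2)) ≠ 0 := (measure_ball_pos μ 0 (by linarith)).ne'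
  obtain ⟨n, hn⟩ := ENNReal.exists_nat_gt
    (ENNReal.div_ne_top (measure_closedBall_lt_top (μ := μ) (x := x) (r := ρ + r / 2)).ne hc)
  obtain ⟨T, hTS, rfl⟩ := Set.Infinite.exists_subset_card_eq hinf n
  have hpack :=
    Finset.card_mul_measure_ball_le_of_pairwise_le_dist μ (hS.mono hTS) (hTS.trans hSx)
  exact hn.not_ge <|
    (ENNReal.le_div_iff_mul_le (.inl hc) (.inl measure_ball_lt_top.ne)).mpr hpack

theorem measure_closedBall_add_le {s : ℝ} (hρ : 1 ≤ ρ) (hs : 0 ≤ s) (x : E) :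
    μ (closedBall x (ρ + s)) ≤
      ENNReal.ofReal ((1 + s) ^ Module.finrank ℝ E) * μ (closedBall 0 ρ) :=
  calc μ (closedBall x (ρ + s)) ≤ μ (closedBall x ((1 + s) * ρ)) :=
        measure_mono (closedBall_subset_closedBall (by nlinarith))
    _ = _ := Measure.addHaar_closedBall_mul μ x (by linarith) (by linarith)

end Packing

theorem UnifDiscrete.pairwise_le_dist {d : ℕ} {r : ℝ} {ω : Set (EuclideanSpace ℝ (Fin d))}
    (hω : UnifDiscrete r ω) : ω.Pairwise fun p q => r ≤ dist p q := by
  intro p hp q hq hne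
  by_contra! hlt
  exact hne (hω p ⟨hp, mem_ball_self (dist_nonneg.trans_lt hlt)⟩
    ⟨hq, by rwa [mem_ball, dist_comm]⟩)

theorem RepetitivityFn.ncard_patches_le {d : ℕ} {ω : Set (EuclideanSpace ℝ (Fin d))}
    {F : ℝ → ℝ} {D : ℝ} {x : EuclideanSpace ℝ (Fin d)} (hrep : RepetitivityFn ω F) (hD : 1 ≤ D)
    (hx : x ∈ ω) (hfin : (ω ∩ closedBall x (F D)).Finite) :
    (patches ω D).ncard ≤ (ω ∩ closedBall x (F D)).ncard := by
  have hsub :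
      patches ω D ⊆ (fun y => transl y ω ∩ closedBall 0 D) '' (ω ∩ closedBall x (F D)) :=
    fun P hP => by
      obtain ⟨y, hy, rfl⟩ := hrep D hD x hx P hP
      exact ⟨y, hy, rfl⟩
  exact (Set.ncard_le_ncard hsub (hfin.image _)).trans (Set.ncard_image_le hfin)

theorem patch_count_le_of_repetitivity_general {d : ℕ} (r : ℝ) (hr : 0 < r)
    (ω : Set (EuclideanSpace ℝ (Fin d))) (hud : UnifDiscrete r ω)
    (F : ℝ → ℝ) (hF : ∀ D : ℝ, 1 ≤ D → 1 ≤ F D) (hrep : RepetitivityFn ω F) :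
    ∃ κ : ℝ, 0 < κ ∧ ∀ D : ℝ, 1 ≤ D →
      ((patches ω D).ncard : ℝ) ≤
        κ * (volume (Metric.closedBall (0 : EuclideanSpace ℝ (Fin d)) (F D))).toReal := by
  set c := volume (ball (0 : EuclideanSpace ℝ (Fin d)) (r / 2))
  have hc : 0 < c.toReal :=
    ENNReal.toReal_pos (measure_ball_pos _ _ (by linarith)).ne' measure_ball_lt_top.ne
  refine ⟨(1 + r / 2) ^ d / c.toReal, by positivity, fun D hD => ?_⟩
  rcases (patches ω D).eq_empty_or_nonempty with hempty | ⟨-, x, hx, -⟩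
  · simp only [hempty, Set.ncard_empty, Nat.cast_zero]
    positivity
  set S := ω ∩ closedBall x (F D)
  have hsep : S.Pairwise fun p q => r ≤ dist p q :=
    hud.pairwise_le_dist.mono Set.inter_subset_left
  have hSfin : S.Finite := hsep.finite_of_le_dist_of_subset_closedBall hr Set.inter_subset_right
  have hcount : ((patches ω D).ncard : ENNReal) * c ≤
      ENNReal.ofReal ((1 + r / 2) ^ d) *
        volume (closedBall (0 : EuclideanSpace ℝ (Fin d)) (F D)) :=
    calc ((patches ω D).ncard : ENNReal) * c ≤ S.ncard * c := by
          gcongr; exact_mod_cast hrep.ncard_patches_le hD hx hSfin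
      _ ≤ volume (closedBall x (F D + r / 2)) :=
          hSfin.ncard_mul_measure_ball_le_of_pairwise_le_dist volume hsep Set.inter_subset_right
      _ ≤ _ := by
          simpa only [finrank_euclideanSpace_fin] using
            measure_closedBall_add_le volume (hF D hD) (by linarith : 0 ≤ r / 2) x
  rw [div_mul_eq_mul_div, le_div_iff₀ hc]
  simpa [ENNReal.toReal_mul, ENNReal.toReal_ofReal (by positivity : (0 : ℝ) ≤ (1 + r / 2) ^ d)]
    using ENNReal.toReal_mono
      (ENNReal.mul_ne_top ENNReal.ofReal_ne_top measure_closedBall_lt_top.ne) hcount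

theorem patch_count_le_of_repetitivity {d : ℕ} (r R : ℝ) (hr : 0 < r) (hR : 0 < R)
    (ω : Set (EuclideanSpace ℝ (Fin d))) (hud : UnifDiscrete r ω) (hrd : RelDense R ω)
    (F : ℝ → ℝ) (hF : ∀ D : ℝ, 1 ≤ D → 1 ≤ F D) (hrep : RepetitivityFn ω F) :
    ∃ κ : ℝ, 0 < κ ∧ ∀ D : ℝ, 1 ≤ D →
      ((patches ω D).ncard : ℝ) ≤
        κ * (volume (Metric.closedBall (0 : EuclideanSpace ℝ (Fin d)) (F D))).toReal :=
  patch_count_le_of_repetitivity_general r hr ω hud F hF hrep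
end
end

section
/- Let ω ⊂ ℝ^d be an (r,R)-Delone set of finite local complexity. For every n ≥ 1, the collection of representatives Ξ^(n) ⊂ Ω(ω) of the n-patches at the origin (one element of the hull per n-patch, each containing 0 and realizing that patch in B_n) is an (n, ε)-separated set for every ε < ε₀ := min{1/√2, r/2, 1/(2R)}. Consequently, card(p_ω(n)) ≤ N(n, ε) for all ε < ε₀. -/
open MeasureTheory Filter

noncomputable section

/-- The Delone metric on uniformly discrete subsets of `ℝ^d`. -/
def deloneDist {d : ℕ} (ξ₁ ξ₂ : Set (EuclideanSpace ℝ (Fin d))) : ℝ :=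
  min (1 / Real.sqrt 2)
    (sInf {S : ℝ | 0 < S ∧ ∃ u ∈ Metric.closedBall (0 : EuclideanSpace ℝ (Fin d)) S,
      ∃ v ∈ Metric.closedBall (0 : EuclideanSpace ℝ (Fin d)) S,
        transl u ξ₁ ∩ Metric.closedBall 0 (1 / S) =
          transl v ξ₂ ∩ Metric.closedBall 0 (1 / S)})

/-- An `(r,R)`-Delone set. -/
def IsDelone {d : ℕ} (r R : ℝ) (ω : Set (EuclideanSpace ℝ (Fin d))) : Prop :=
  UnifDiscrete r ω ∧ RelDense R ω

/-- The hull of `ω`: the closure of the translation orbit of `ω` in the space of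
`(r,R)`-Delone sets equipped with the Delone metric. -/
def hull {d : ℕ} (r R : ℝ) (ω : Set (EuclideanSpace ℝ (Fin d))) :
    Set (Set (EuclideanSpace ℝ (Fin d))) :=
  {ω' | IsDelone r R ω' ∧ ∀ ε : ℝ, 0 < ε →
    ∃ x : EuclideanSpace ℝ (Fin d), deloneDist (transl x ω) ω' < ε}

/-- `Ξ` is a `(D,ε)`-separated set in the hull (w.r.t. the Delone metric and the
translation action). -/
def IsSepHull {d : ℕ} (D ε : ℝ) (Ξ : Set (Set (EuclideanSpace ℝ (Fin d)))) : Prop :=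
  ∀ ξ₁ ∈ Ξ, ∀ ξ₂ ∈ Ξ, ξ₁ ≠ ξ₂ →
    ∃ x ∈ Metric.closedBall (0 : EuclideanSpace ℝ (Fin d)) D,
      ε < deloneDist (transl x ξ₁) (transl x ξ₂)

/-- `N(D,ε)`: the maximal cardinality of a `(D,ε)`-separated subset of the hull. -/
def sepNumHull {d : ℕ} (r R : ℝ) (ω : Set (EuclideanSpace ℝ (Fin d))) (D ε : ℝ) : ℕ :=
  sSup {k : ℕ | ∃ Ξ : Finset (Set (EuclideanSpace ℝ (Fin d))),
    (Ξ : Set (Set (EuclideanSpace ℝ (Fin d)))) ⊆ hull r R ω ∧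
    IsSepHull D ε (Ξ : Set (Set (EuclideanSpace ℝ (Fin d)))) ∧ Ξ.card = k}

/-- `H_ε(Ω(ω), α) = limsup_n (1/|B_n|) log N(n,ε)`. -/
def HepsHull {d : ℕ} (r R : ℝ) (ω : Set (EuclideanSpace ℝ (Fin d))) (ε : ℝ) : ℝ :=
  Filter.limsup (fun n : ℕ =>
    Real.log (sepNumHull r R ω (n : ℝ) ε) /
      (volume (Metric.closedBall (0 : EuclideanSpace ℝ (Fin d)) (n : ℝ))).toReal) atTop

/-- Topological entropy of the hull dynamical system, as the supremum (= limit as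
`ε → 0`, by antitonicity) of the `H_ε`. -/
def htopHull {d : ℕ} (r R : ℝ) (ω : Set (EuclideanSpace ℝ (Fin d))) : ℝ :=
  ⨆ ε : {ε : ℝ // 0 < ε}, HepsHull r R ω ε

/-!
Suppose two representatives stay `ε`-close along the orbit segment `B_n`. At each `x ∈ B_n` their
translates then match on a ball of radius `> 2R`, up to shifts of size `< r / 2`. A common point
near `x` forces the shifts to coincide, by uniform discreteness, and relative density then carries
common points from the origin to all of `B_n`: the two representatives have the same `n`-patch.

Since `sepNumHull` is an `sSup` in `ℕ` (which is `0` for unbounded sets), the counting part needs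
`N(n, ε)` to be finite. An element of the hull agrees on a large ball with `ω` translated by
`w + s`, where `w ∈ ω` and `‖s‖ ≤ R`. Labelling it by the large patch of `ω` at `w` (finitely many,
by finite local complexity) and by a point within `ε / 2` of `s` in a finite net of `B_R` is
injective on every `(n, ε)`-separated set, because equal labels keep two elements `ε`-close along
`B_n`.
-/

open Metric

section

variable {d : ℕ} {r R ρ δ ε D L : ℝ} {ξ ξ₁ ξ₂ ω : Set (EuclideanSpace ℝ (Fin d))}
  {a b p q u x y z : EuclideanSpace ℝ (Fin d)}

lemma mem_transl : y ∈ transl x ξ ↔ y + x ∈ ξ :=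
  ⟨fun ⟨_, ha, hy⟩ => by rwa [← hy, sub_add_cancel],
    fun h => ⟨y + x, h, add_sub_cancel_right y x⟩⟩

lemma transl_inter_closedBall_eq_iff :
    transl a ξ₁ ∩ closedBall 0 ρ = transl b ξ₂ ∩ closedBall 0 ρ ↔
      ∀ z, ‖z‖ ≤ ρ → (z + a ∈ ξ₁ ↔ z + b ∈ ξ₂) := by
  simp only [Set.ext_iff, Set.mem_inter_iff, mem_transl, mem_closedBall_zero_iff]
  exact forall_congr' fun _ => and_congr_left_iff

lemma UnifDiscrete.eq_of_dist_lt (h : UnifDiscrete r ξ) (hp : p ∈ ξ) (hq : q ∈ ξ)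
    (hpq : dist p q < r) : p = q :=
  h q ⟨hp, hpq⟩ ⟨hq, mem_ball_self (dist_nonneg.trans_lt hpq)⟩

lemma UnifDiscrete.transl (h : UnifDiscrete r ξ) (a : EuclideanSpace ℝ (Fin d)) :
    UnifDiscrete r (transl a ξ) := fun x _ hp _ hq =>
  add_right_cancel <| h (x + a)
    ⟨mem_transl.1 hp.1, by rw [mem_ball, dist_add_right]; exact hp.2⟩
    ⟨mem_transl.1 hq.1, by rw [mem_ball, dist_add_right]; exact hq.2⟩

lemma RelDense.transl (h : RelDense R ξ) (a : EuclideanSpace ℝ (Fin d)) :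
    RelDense R (transl a ξ) := fun x => by
  obtain ⟨w, hw, hwx⟩ := h (x + a)
  exact ⟨w - a, mem_transl.2 (by rwa [sub_add_cancel]),
    by rwa [mem_closedBall, dist_comm, dist_sub_eq_dist_add_right, dist_comm]⟩

lemma IsDelone.transl (h : IsDelone r R ξ) (a : EuclideanSpace ℝ (Fin d)) :
    IsDelone r R (transl a ξ) :=
  ⟨h.1.transl a, h.2.transl a⟩

lemma IsDelone.nonempty (h : IsDelone r R ξ) : ξ.Nonempty :=
  (h.2 0).left

lemma add_mem_iff_eq_zero (h : UnifDiscrete r ξ) (hu : u ∈ ξ) (hz : ‖z‖ < r) :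
    z + u ∈ ξ ↔ z = 0 := by
  refine ⟨fun hzu => ?_, fun hz0 => by rwa [hz0, zero_add]⟩
  simpa using h.eq_of_dist_lt hzu hu (by rwa [dist_add_self_left])

def deloneScales (ξ₁ ξ₂ : Set (EuclideanSpace ℝ (Fin d))) : Set ℝ :=
  {S : ℝ | 0 < S ∧ ∃ u ∈ closedBall (0 : EuclideanSpace ℝ (Fin d)) S,
    ∃ v ∈ closedBall (0 : EuclideanSpace ℝ (Fin d)) S,
      transl u ξ₁ ∩ closedBall 0 (1 / S) = transl v ξ₂ ∩ closedBall 0 (1 / S)}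

lemma mem_deloneScales {S : ℝ} :
    S ∈ deloneScales ξ₁ ξ₂ ↔ 0 < S ∧ ∃ u : EuclideanSpace ℝ (Fin d), ‖u‖ ≤ S ∧
      ∃ v : EuclideanSpace ℝ (Fin d), ‖v‖ ≤ S ∧ ∀ z, ‖z‖ ≤ 1 / S → (z + u ∈ ξ₁ ↔ z + v ∈ ξ₂) := by
  simp only [deloneScales, Set.mem_ofPred_eq, mem_closedBall_zero_iff,
    transl_inter_closedBall_eq_iff]

lemma deloneDist_le_of_mem_deloneScales {S : ℝ} (hS : S ∈ deloneScales ξ₁ ξ₂) :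
    deloneDist ξ₁ ξ₂ ≤ S :=
  (min_le_right _ _).trans (csInf_le ⟨0, fun _ h => h.1.le⟩ hS)

/-- At scales below `r`, both patches around points `u ∈ ξ₁`, `v ∈ ξ₂` reduce to `{0}`. -/
lemma deloneScales_nonempty (hr : 0 < r) (h₁ : UnifDiscrete r ξ₁) (h₂ : UnifDiscrete r ξ₂)
    (hne₁ : ξ₁.Nonempty) (hne₂ : ξ₂.Nonempty) : (deloneScales ξ₁ ξ₂).Nonempty := by
  obtain ⟨u, hu⟩ := hne₁
  obtain ⟨v, hv⟩ := hne₂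
  have hr' : 0 < 2 / r := by positivity
  set S := ‖u‖ + ‖v‖ + 2 / r
  have hSr : 1 / S < r :=
    calc 1 / S ≤ 1 / (2 / r) := one_div_le_one_div_of_le hr' (le_add_of_nonneg_left (by positivity))
      _ < r := by rw [one_div_div]; linarith
  refine ⟨S, mem_deloneScales.2 ⟨by positivity, u, ?_, v, ?_, fun z hz => ?_⟩⟩
  · simp only [S]; linarith [norm_nonneg v]
  · simp only [S]; linarith [norm_nonneg u]
  · rw [add_mem_iff_eq_zero h₁ hu (hz.trans_lt hSr), add_mem_iff_eq_zero h₂ hv (hz.trans_lt hSr)]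

lemma exists_scale_of_deloneDist_lt (hr : 0 < r) (h₁ : IsDelone r R ξ₁) (h₂ : IsDelone r R ξ₂)
    (h : deloneDist ξ₁ ξ₂ < δ) (hδ : δ ≤ 1 / √2) :
    ∃ S, 0 < S ∧ S < δ ∧ ∃ u : EuclideanSpace ℝ (Fin d), ‖u‖ ≤ S ∧
      ∃ v : EuclideanSpace ℝ (Fin d), ‖v‖ ≤ S ∧ ∀ z, ‖z‖ ≤ 1 / S → (z + u ∈ ξ₁ ↔ z + v ∈ ξ₂) := by
  obtain ⟨S, hS, hSδ⟩ := (csInf_lt_iff ⟨0, fun _ h => h.1.le⟩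
    (deloneScales_nonempty hr h₁.1 h₂.1 h₁.nonempty h₂.nonempty)).1
    ((min_lt_iff.1 h).resolve_left hδ.not_gt)
  obtain ⟨hS0, huv⟩ := mem_deloneScales.1 hS
  exact ⟨S, hS0, hSδ, huv⟩

/-- The common point forces `a = b`, by discreteness of `ξ₂`. -/
lemma mem_iff_mem_of_agree_of_common_point (h₂ : UnifDiscrete r ξ₂)
    (hagree : ∀ z, ‖z‖ ≤ ρ → (z + a ∈ ξ₁ ↔ z + b ∈ ξ₂)) (hab : dist a b < r)
    (hp : p ∈ ξ₁ ∩ ξ₂) (hpa : dist p a ≤ ρ) (hqa : dist q a ≤ ρ) : q ∈ ξ₁ ↔ q ∈ ξ₂ := by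
  have hshift : p - a + b ∈ ξ₂ :=
    (hagree (p - a) (by rwa [← dist_eq_norm])).1 (by rw [sub_add_cancel]; exact hp.1)
  have hdist : dist (p - a + b) p = dist b a := by
    rw [dist_eq_norm, dist_eq_norm]; congr 1; abel
  have hba : b = a := by
    have hp' := h₂.eq_of_dist_lt hshift hp.2 (by rwa [hdist, dist_comm])
    calc b = (p - a + b) - p + a := by abel
      _ = a := by rw [hp', sub_self, zero_add]
  have := hagree (q - a) (by rwa [← dist_eq_norm])
  rwa [hba, sub_add_cancel] at this

/-- A common point near `y` is found from one near `(k / (k + 1)) • y`, which lies within `t`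
of `y`. -/
lemma exists_common_point_near {t : ℝ} (hR : 0 ≤ R) (h0 : 0 ∈ ξ₁ ∩ ξ₂) (hdense : RelDense R ξ₁)
    (hlocal : ∀ x : EuclideanSpace ℝ (Fin d), ‖x‖ ≤ D → ∀ p ∈ ξ₁ ∩ ξ₂, dist p x ≤ R →
      ∀ q, dist q x ≤ R + t → (q ∈ ξ₁ ↔ q ∈ ξ₂))
    (k : ℕ) (hyD : ‖y‖ ≤ D) (hyk : ‖y‖ ≤ k * t) :
    ∃ p ∈ ξ₁ ∩ ξ₂, dist p y ≤ R := by
  induction k generalizing y with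
  | zero =>
    have hy : y = 0 := norm_le_zero_iff.1 (by simpa using hyk)
    exact ⟨0, h0, by rw [hy, dist_self]; exact hR⟩
  | succ k ih =>
    push_cast at hyk
    have hk : (0 : ℝ) < k + 1 := by positivity
    set y' : EuclideanSpace ℝ (Fin d) := ((k : ℝ) / (k + 1)) • y
    have hy' : ‖y'‖ = k / (k + 1) * ‖y‖ := by
      rw [norm_smul, Real.norm_of_nonneg (by positivity)]
    have hyy' : dist y y' ≤ t := by
      have hc : (1 : ℝ) - k / (k + 1) = 1 / (k + 1) := by field_simp; ring
      rw [dist_eq_norm, show y - y' = (1 / ((k : ℝ) + 1)) • y by rw [← hc, sub_smul, one_smul],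
        norm_smul, Real.norm_of_nonneg (by positivity), one_div_mul_eq_div, div_le_iff₀ hk]
      linarith
    have hy'D : ‖y'‖ ≤ D := by
      rw [hy']
      exact (mul_le_of_le_one_left (norm_nonneg y) ((div_le_one hk).2 (by linarith))).trans hyD
    have hy'k : ‖y'‖ ≤ k * t := by
      rw [hy']
      calc (k : ℝ) / (k + 1) * ‖y‖ ≤ k / (k + 1) * ((k + 1) * t) := by gcongr
        _ = k * t := by field_simp
    obtain ⟨p, hp, hpy'⟩ := ih hy'D hy'k
    obtain ⟨w, hw, hwy⟩ := hdense y
    have hwy' : dist w y' ≤ R + t :=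
      (dist_triangle w y y').trans (add_le_add (mem_closedBall.1 hwy) hyy')
    exact ⟨w, ⟨hw, (hlocal y' hy'D p hp hpy' w hwy').1 hw⟩, mem_closedBall.1 hwy⟩

lemma mem_iff_mem_of_propagation {t : ℝ} (hR : 0 ≤ R) (ht : 0 < t) (h0 : 0 ∈ ξ₁ ∩ ξ₂)
    (hdense : RelDense R ξ₁)
    (hlocal : ∀ x : EuclideanSpace ℝ (Fin d), ‖x‖ ≤ D → ∀ p ∈ ξ₁ ∩ ξ₂, dist p x ≤ R →
      ∀ q, dist q x ≤ R + t → (q ∈ ξ₁ ↔ q ∈ ξ₂))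
    (hz : ‖z‖ ≤ D) : z ∈ ξ₁ ↔ z ∈ ξ₂ := by
  obtain ⟨k, hk⟩ := exists_nat_ge (‖z‖ / t)
  obtain ⟨p, hp, hpz⟩ :=
    exists_common_point_near hR h0 hdense hlocal k hz ((div_le_iff₀ ht).1 hk)
  exact hlocal z hz p hp hpz z (by rw [dist_self]; linarith)

/-- Steps of length `R / 2` suffice because each local match covers a ball of radius
`1 / S ≥ 2R`. -/
lemma inter_closedBall_eq_of_forall_deloneDist_lt (hr : 0 < r) (hrR : r ≤ R)
    (h₁ : IsDelone r R ξ₁) (h₂ : IsDelone r R ξ₂) (h0 : 0 ∈ ξ₁ ∩ ξ₂)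
    (hδ : δ ≤ 1 / √2) (hδr : δ ≤ r / 2) (hδR : δ ≤ 1 / (2 * R))
    (hdist : ∀ x ∈ closedBall 0 D, deloneDist (transl x ξ₁) (transl x ξ₂) < δ) :
    ξ₁ ∩ closedBall 0 D = ξ₂ ∩ closedBall 0 D := by
  have hR : 0 < R := hr.trans_le hrR
  refine Set.ext fun z => and_congr_left fun hz => mem_iff_mem_of_propagation hR.le
    (half_pos hR) h0 h₁.2 (fun x hx p hp hpx q hqx => ?_) (mem_closedBall_zero_iff.1 hz)
  obtain ⟨S, hS, hSδ, u, hu, v, hv, hagree⟩ := exists_scale_of_deloneDist_lt hr (h₁.transl x)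
    (h₂.transl x) (hdist x (mem_closedBall_zero_iff.2 hx)) hδ
  simp only [mem_transl, add_assoc] at hagree
  have h2R : 2 * R ≤ 1 / S :=
    ((le_one_div (hS.trans hSδ) (mul_pos two_pos hR)).1 hδR).trans
      (one_div_le_one_div_of_le hS hSδ.le)
  have hxu : dist x (u + x) ≤ S := by rw [dist_comm, dist_add_self_left]; exact hu
  refine mem_iff_mem_of_agree_of_common_point h₂.1 hagree ?_ hp ?_ ?_
  · rw [dist_add_right]
    linarith [dist_le_norm_add_norm u v]
  · linarith [dist_triangle p x (u + x)]
  · linarith [dist_triangle q x (u + x)]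

lemma isSepHull_of_injOn_inter_closedBall (hr : 0 < r) (hrR : r ≤ R)
    {Ξ : Set (Set (EuclideanSpace ℝ (Fin d)))} (hΞ : ∀ ξ ∈ Ξ, IsDelone r R ξ)
    (h0 : ∀ ξ ∈ Ξ, 0 ∈ ξ) (hinj : Set.InjOn (· ∩ closedBall 0 D) Ξ)
    (hε : ε < min (min (1 / √2) (r / 2)) (1 / (2 * R))) : IsSepHull D ε Ξ := by
  intro ξ₁ h₁ ξ₂ h₂ hne
  by_contra! hle
  exact hne <| hinj h₁ h₂ <| inter_closedBall_eq_of_forall_deloneDist_lt hr hrR (hΞ ξ₁ h₁)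
    (hΞ ξ₂ h₂) ⟨h0 ξ₁ h₁, h0 ξ₂ h₂⟩ ((min_le_left _ _).trans (min_le_left _ _))
    ((min_le_left _ _).trans (min_le_right _ _)) (min_le_right _ _)
    fun x hx => (hle x hx).trans_lt hε

/-- A translate of `ω` that is `1 / (|L| + 2)`-close to `ξ` matches it on `B_L`; the translation
vector is then split off a point of `ω` by relative density. -/
lemma exists_mem_agree_of_mem_hull (hr : 0 < r) (hω : IsDelone r R ω) (hξ : ξ ∈ hull r R ω)
    (L : ℝ) : ∃ w ∈ ω, ∃ s : EuclideanSpace ℝ (Fin d), ‖s‖ ≤ R ∧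
      ∀ z, ‖z‖ ≤ L → (z ∈ ξ ↔ z + s + w ∈ ω) := by
  have hL : 0 < |L| + 2 := by positivity
  obtain ⟨x, hx⟩ := hξ.2 (1 / (|L| + 2)) (by positivity)
  have hδ : 1 / (|L| + 2) ≤ 1 / √2 :=
    one_div_le_one_div_of_le (by positivity)
      (by linarith [abs_nonneg L, Real.sqrt_two_lt_three_halves])
  obtain ⟨S, hS, hSδ, u, hu, v, hv, hagree⟩ :=
    exists_scale_of_deloneDist_lt hr (hω.transl x) hξ.1 hx hδ
  have hmatch : ∀ z, ‖z‖ ≤ L → (z ∈ ξ ↔ z + (u + x - v) ∈ ω) := by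
    intro z hz
    have hS1 : S ≤ 1 := hSδ.le.trans ((div_le_one hL).2 (by linarith [abs_nonneg L]))
    have hzv : ‖z - v‖ ≤ 1 / S := by
      calc ‖z - v‖ ≤ |L| + 2 := by linarith [norm_sub_le z v, le_abs_self L]
        _ = 1 / (1 / (|L| + 2)) := (one_div_one_div _).symm
        _ ≤ 1 / S := one_div_le_one_div_of_le hS hSδ.le
    have := hagree (z - v) hzv
    rw [mem_transl, sub_add_cancel] at this
    rw [← this, show z - v + u + x = z + (u + x - v) by abel]
  obtain ⟨w, hw, hwt⟩ := hω.2 (u + x - v)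
  refine ⟨w, hw, u + x - v - w, by rwa [← dist_eq_norm, dist_comm], fun z hz => ?_⟩
  rw [hmatch z hz, add_assoc, sub_add_cancel]

lemma mem_iff_add_mem_of_patch_eq {w₁ w₂ s₁ s₂ : EuclideanSpace ℝ (Fin d)}
    (h₁ : ∀ z, ‖z‖ ≤ L → (z ∈ ξ₁ ↔ z + s₁ + w₁ ∈ ω))
    (h₂ : ∀ z, ‖z‖ ≤ L → (z ∈ ξ₂ ↔ z + s₂ + w₂ ∈ ω))
    (hP : transl w₁ ω ∩ closedBall 0 L = transl w₂ ω ∩ closedBall 0 L)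
    (hs₁ : ρ + ‖s₁‖ ≤ L) (hs : ρ + ‖s₁ - s₂‖ ≤ L) (hz : ‖z‖ ≤ ρ) :
    z ∈ ξ₁ ↔ z + (s₁ - s₂) ∈ ξ₂ :=
  calc z ∈ ξ₁ ↔ z + s₁ + w₁ ∈ ω := h₁ z (by linarith [norm_nonneg s₁])
    _ ↔ z + s₁ + w₂ ∈ ω :=
      transl_inter_closedBall_eq_iff.1 hP _ (by linarith [norm_add_le z s₁])
    _ ↔ z + (s₁ - s₂) ∈ ξ₂ := by
      rw [h₂ _ (by linarith [norm_add_le z (s₁ - s₂)]), add_sub_assoc', sub_add_cancel]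

lemma deloneDist_transl_le_of_agree (hε : 0 < ε) (ha : ‖a‖ ≤ ε)
    (h : ∀ z, ‖z‖ ≤ D + 1 / ε → (z ∈ ξ₁ ↔ z + a ∈ ξ₂)) (hx : ‖x‖ ≤ D) :
    deloneDist (transl x ξ₁) (transl x ξ₂) ≤ ε := by
  refine deloneDist_le_of_mem_deloneScales <|
    mem_deloneScales.2 ⟨hε, 0, by rw [norm_zero]; exact hε.le, a, ha, fun z hz => ?_⟩
  rw [mem_transl, mem_transl, add_zero, add_right_comm]
  exact h _ (by linarith [norm_add_le z x])

lemma card_le_of_isSepHull (hr : 0 < r) (hω : IsDelone r R ω) (hε : 0 < ε)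
    {F : Set (EuclideanSpace ℝ (Fin d))} (hFfin : F.Finite)
    (hF : closedBall 0 R ⊆ ⋃ c ∈ F, ball c (ε / 2))
    (hP : (patches ω (D + 1 / ε + R + ε)).Finite) {Ξ : Finset (Set (EuclideanSpace ℝ (Fin d)))}
    (hsub : (Ξ : Set (Set (EuclideanSpace ℝ (Fin d)))) ⊆ hull r R ω)
    (hsep : IsSepHull D ε (Ξ : Set (Set (EuclideanSpace ℝ (Fin d))))) :
    Ξ.card ≤ (hP.toFinset ×ˢ hFfin.toFinset).card := by
  set L := D + 1 / ε + R + ε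
  have hlabel : ∀ ξ ∈ Ξ, ∃ w ∈ ω, ∃ s : EuclideanSpace ℝ (Fin d), ‖s‖ ≤ R ∧
      (∀ z, ‖z‖ ≤ L → (z ∈ ξ ↔ z + s + w ∈ ω)) ∧ ∃ c ∈ F, dist s c < ε / 2 := by
    intro ξ hξ
    obtain ⟨w, hw, s, hs, hagree⟩ := exists_mem_agree_of_mem_hull hr hω (hsub hξ) L
    obtain ⟨c, hc, hsc⟩ := Set.mem_iUnion₂.1 (hF (mem_closedBall_zero_iff.2 hs))
    exact ⟨w, hw, s, hs, hagree, c, hc, hsc⟩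
  choose! w hw s hs hagree c hc hsc using hlabel
  refine Finset.card_le_card_of_injOn (fun ξ => (transl (w ξ) ω ∩ closedBall 0 L, c ξ))
    (fun ξ hξ => ?_) (fun ξ₁ h₁ ξ₂ h₂ heq => ?_)
  · simp only [Finset.mem_coe, Finset.mem_product, Set.Finite.mem_toFinset]
    exact ⟨⟨w ξ, hw ξ hξ, rfl⟩, hc ξ hξ⟩
  by_contra hne
  obtain ⟨x, hx, hlt⟩ := hsep ξ₁ h₁ ξ₂ h₂ hne
  obtain ⟨hpatch, hlabel⟩ := Prod.mk.inj heq
  have hss : ‖s ξ₁ - s ξ₂‖ ≤ ε := by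
    rw [← dist_eq_norm]
    linarith [dist_triangle_right (s ξ₁) (s ξ₂) (c ξ₁), hsc ξ₁ h₁, hlabel ▸ hsc ξ₂ h₂]
  have hR := (norm_nonneg _).trans (hs ξ₁ h₁)
  exact hlt.not_ge <| deloneDist_transl_le_of_agree hε hss
    (fun z hz => mem_iff_add_mem_of_patch_eq (hagree ξ₁ h₁) (hagree ξ₂ h₂) hpatch
      (by linarith [hs ξ₁ h₁]) (by linarith) hz) (mem_closedBall_zero_iff.1 hx)

lemma card_le_sepNumHull (hr : 0 < r) (hω : IsDelone r R ω) (hflc : FLC ω) (hε : 0 < ε)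
    (hD : 0 ≤ D) {Ξ : Finset (Set (EuclideanSpace ℝ (Fin d)))}
    (hsub : (Ξ : Set (Set (EuclideanSpace ℝ (Fin d)))) ⊆ hull r R ω)
    (hsep : IsSepHull D ε (Ξ : Set (Set (EuclideanSpace ℝ (Fin d))))) :
    Ξ.card ≤ sepNumHull r R ω D ε := by
  have hR : 0 ≤ R := nonempty_closedBall.1 (hω.2 0).right
  obtain ⟨F, -, hFfin, hF⟩ :=
    finite_cover_balls_of_compact (isCompact_closedBall (0 : EuclideanSpace ℝ (Fin d)) R)
      (half_pos hε)
  have hP := hflc (D + 1 / ε + R + ε) (by linarith [one_div_pos.2 hε])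
  refine le_csSup ⟨(hP.toFinset ×ˢ hFfin.toFinset).card, ?_⟩ ⟨Ξ, hsub, hsep, rfl⟩
  rintro k ⟨Ξ', hsub', hsep', rfl⟩
  exact card_le_of_isSepHull hr hω hε hFfin hF hP hsub' hsep'

end

theorem representatives_separated_general {d : ℕ} (r R : ℝ) (hr : 0 < r) (hrR : r ≤ R)
    (ω : Set (EuclideanSpace ℝ (Fin d))) (hω : IsDelone r R ω) (hflc : FLC ω)
    (n : ℕ) (Ξ : Finset (Set (EuclideanSpace ℝ (Fin d))))
    (hsub : (Ξ : Set (Set (EuclideanSpace ℝ (Fin d)))) ⊆ hull r R ω)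
    (hzero : ∀ ξ ∈ Ξ, (0 : EuclideanSpace ℝ (Fin d)) ∈ ξ)
    (hrepr : patches ω (n : ℝ) =
      {P | ∃ ξ ∈ Ξ, P = ξ ∩ Metric.closedBall (0 : EuclideanSpace ℝ (Fin d)) (n : ℝ)})
    (hinj : ∀ ξ₁ ∈ Ξ, ∀ ξ₂ ∈ Ξ,
      ξ₁ ∩ Metric.closedBall (0 : EuclideanSpace ℝ (Fin d)) (n : ℝ) =
        ξ₂ ∩ Metric.closedBall (0 : EuclideanSpace ℝ (Fin d)) (n : ℝ) → ξ₁ = ξ₂) :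
    ∀ ε : ℝ, 0 < ε → ε < min (min (1 / Real.sqrt 2) (r / 2)) (1 / (2 * R)) →
      IsSepHull (n : ℝ) ε (Ξ : Set (Set (EuclideanSpace ℝ (Fin d)))) ∧
        (patches ω (n : ℝ)).ncard ≤ sepNumHull r R ω (n : ℝ) ε := by
  intro ε hε hεm
  have hsep : IsSepHull (n : ℝ) ε (Ξ : Set (Set (EuclideanSpace ℝ (Fin d)))) :=
    isSepHull_of_injOn_inter_closedBall hr hrR (fun ξ hξ => (hsub hξ).1) hzero
      (fun ξ₁ h₁ ξ₂ h₂ => hinj ξ₁ h₁ ξ₂ h₂) hεm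
  have hpatches : patches ω (n : ℝ) = (· ∩ closedBall 0 (n : ℝ)) '' (Ξ : Set _) := by
    rw [hrepr]
    ext P
    simp only [Set.mem_image, Finset.mem_coe, eq_comm (a := P), Set.mem_ofPred_eq]
  refine ⟨hsep, ?_⟩
  calc (patches ω (n : ℝ)).ncard ≤ (Ξ : Set (Set (EuclideanSpace ℝ (Fin d)))).ncard :=
        hpatches ▸ Set.ncard_image_le Ξ.finite_toSet
    _ = Ξ.card := Set.ncard_coe_finset Ξ
    _ ≤ sepNumHull r R ω (n : ℝ) ε := card_le_sepNumHull hr hω hflc hε n.cast_nonneg hsub hsep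

theorem representatives_separated {d : ℕ} (r R : ℝ) (hr : 0 < r) (hrR : r ≤ R)
    (ω : Set (EuclideanSpace ℝ (Fin d))) (hω : IsDelone r R ω) (hflc : FLC ω)
    (n : ℕ) (hn : 1 ≤ n) (Ξ : Finset (Set (EuclideanSpace ℝ (Fin d))))
    (hsub : (Ξ : Set (Set (EuclideanSpace ℝ (Fin d)))) ⊆ hull r R ω)
    (hzero : ∀ ξ ∈ Ξ, (0 : EuclideanSpace ℝ (Fin d)) ∈ ξ)
    (hrepr : patches ω (n : ℝ) =
      {P | ∃ ξ ∈ Ξ, P = ξ ∩ Metric.closedBall (0 : EuclideanSpace ℝ (Fin d)) (n : ℝ)})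
    (hinj : ∀ ξ₁ ∈ Ξ, ∀ ξ₂ ∈ Ξ,
      ξ₁ ∩ Metric.closedBall (0 : EuclideanSpace ℝ (Fin d)) (n : ℝ) =
        ξ₂ ∩ Metric.closedBall (0 : EuclideanSpace ℝ (Fin d)) (n : ℝ) → ξ₁ = ξ₂) :
    ∀ ε : ℝ, 0 < ε → ε < min (min (1 / Real.sqrt 2) (r / 2)) (1 / (2 * R)) →
      IsSepHull (n : ℝ) ε (Ξ : Set (Set (EuclideanSpace ℝ (Fin d)))) ∧
        (patches ω (n : ℝ)).ncard ≤ sepNumHull r R ω (n : ℝ) ε :=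
  representatives_separated_general r R hr hrR ω hω hflc n Ξ hsub hzero hrepr hinj
end
end

section
/- Let a_n = 1 + e + e² + ⋯ + e^{n−1} for n ∈ ℕ (where e is Euler's number), and let Λ = {±a_n : n ∈ ℕ} ⊂ ℝ. Then Λ is uniformly discrete but not relatively dense, and Λ has finite local complexity: for every D > 0, the set of D-patches {(−x + Λ) ∩ [−D, D] : x ∈ Λ} is finite. -/
/-!
The gaps `a (n+1) - a n = e^n ≥ n + 1` grow without bound, and since `a` is increasing with
`a n ≥ n`, the point `±a n` of `Λ` is at distance at least `n` from every other point of `Λ`.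
So distinct points are at least `1` apart, arbitrarily long intervals miss `Λ`, and for `n > D`
the `D`-patch at `±a n` is contained in `{0}`: only the finitely many points `±a n` with `n ≤ D`
can have any other patch.
-/

open Filter

noncomputable section

/-- `a n = 1 + e + e² + ⋯ + e^{n-1}`. -/
def geomE (n : ℕ) : ℝ := ∑ i ∈ Finset.range n, Real.exp 1 ^ i

/-- `Λ = {± a n : n ≥ 1}`. -/
def Lam : Set ℝ := {x | ∃ n : ℕ, 1 ≤ n ∧ (x = geomE n ∨ x = -geomE n)}

/-- The set of `D`-patches of `Λ`: `(−x + Λ) ∩ [−D, D]` for `x ∈ Λ`. -/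
def patchesLam (D : ℝ) : Set (Set ℝ) :=
  {P | ∃ x ∈ Lam, P = ((fun y => y - x) '' Lam) ∩ Set.Icc (-D) D}

lemma add_one_le_exp_one_pow (n : ℕ) : (n : ℝ) + 1 ≤ Real.exp 1 ^ n := by
  simpa [← Real.exp_nat_mul] using Real.add_one_le_exp n

lemma geomE_succ (n : ℕ) : geomE (n + 1) = geomE n + Real.exp 1 ^ n :=
  Finset.sum_range_succ _ n

lemma geomE_nonneg (n : ℕ) : 0 ≤ geomE n := by
  unfold geomE
  positivity

lemma geomE_strictMono : StrictMono geomE :=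
  strictMono_nat_of_lt_succ fun n => by
    rw [geomE_succ]
    exact lt_add_of_pos_right _ (by positivity)

lemma le_geomE_sub_geomE {k l : ℕ} (hkl : k < l) : (l : ℝ) ≤ geomE l - geomE k := by
  obtain ⟨m, rfl⟩ := Nat.exists_eq_add_of_lt hkl
  have hmono : geomE k ≤ geomE (k + m) := geomE_strictMono.monotone (Nat.le_add_right k m)
  have hstep := add_one_le_exp_one_pow (k + m)
  rw [geomE_succ]
  push_cast at hstep ⊢
  linarith

lemma le_geomE (n : ℕ) : (n : ℝ) ≤ geomE n := by
  rcases Nat.eq_zero_or_pos n with rfl | hn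
  · simp [geomE]
  · simpa [geomE] using le_geomE_sub_geomE hn

lemma le_abs_geomE_sub_geomE {n m : ℕ} (hnm : n ≠ m) : (n : ℝ) ≤ |geomE n - geomE m| := by
  rcases hnm.lt_or_gt with h | h
  · have hgap := le_geomE_sub_geomE h
    have : (n : ℝ) < m := by exact_mod_cast h
    exact le_abs.mpr (Or.inr (by linarith))
  · exact le_abs.mpr (Or.inl (le_geomE_sub_geomE h))

lemma le_abs_sub_of_eq_pm_geomE {n m : ℕ} {x y : ℝ} (hx : x = geomE n ∨ x = -geomE n)
    (hy : y = geomE m ∨ y = -geomE m) (hxy : x ≠ y) : (n : ℝ) ≤ |x - y| := by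
  have hn := le_geomE n
  have hm := geomE_nonneg m
  rcases hx with rfl | rfl <;> rcases hy with rfl | rfl
  · exact le_abs_geomE_sub_geomE fun h => hxy (h ▸ rfl)
  · exact le_abs.mpr (Or.inl (by linarith))
  · exact le_abs.mpr (Or.inr (by linarith))
  · rw [neg_sub_neg, abs_sub_comm]
    exact le_abs_geomE_sub_geomE fun h => hxy (h ▸ rfl)

lemma Lam_inter_Ioo_geomE_succ_eq_empty (n : ℕ) :
    Lam ∩ Set.Ioo (geomE n) (geomE (n + 1)) = ∅ := by
  refine Set.eq_empty_of_forall_notMem ?_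
  rintro x ⟨⟨m, -, rfl | rfl⟩, hlo, hhi⟩
  · have hnm : n < m := geomE_strictMono.lt_iff_lt.mp hlo
    exact (geomE_strictMono.monotone hnm).not_gt hhi
  · linarith [geomE_nonneg n, geomE_nonneg m]

lemma exists_Lam_inter_closedBall_eq_empty (R : ℝ) :
    ∃ c, Lam ∩ Metric.closedBall c R = ∅ := by
  obtain ⟨n, hn⟩ := exists_nat_gt (2 * R)
  have hgap := le_geomE_sub_geomE n.lt_succ_self
  refine ⟨(geomE n + geomE (n + 1)) / 2, Set.subset_eq_empty ?_
    (Lam_inter_Ioo_geomE_succ_eq_empty n)⟩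
  rw [Real.Ioo_eq_ball]
  refine Set.inter_subset_inter_right _ (Metric.closedBall_subset_ball ?_)
  push_cast at hgap
  linarith

lemma Lam_patch_subset_zero {D : ℝ} {n : ℕ} {x : ℝ} (hx : x = geomE n ∨ x = -geomE n)
    (hD : D < n) : ((fun y => y - x) '' Lam) ∩ Set.Icc (-D) D ⊆ {0} := by
  rintro _ ⟨⟨y, ⟨m, -, hy⟩, rfl⟩, hyD⟩
  by_contra hne
  have hfar := le_abs_sub_of_eq_pm_geomE hx hy fun h => hne (by simp [h])
  have hnear : |x - y| ≤ D := by
    rw [abs_sub_comm]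
    exact abs_le.mpr hyD
  linarith

lemma patchesLam_finite (D : ℝ) : (patchesLam D).Finite := by
  let small : Set ℝ := geomE '' Set.Iic ⌊D⌋₊ ∪ (fun n => -geomE n) '' Set.Iic ⌊D⌋₊
  have hsmall : small.Finite :=
    ((Set.finite_Iic _).image _).union ((Set.finite_Iic _).image _)
  refine ((hsmall.image fun x => ((fun y => y - x) '' Lam) ∩ Set.Icc (-D) D).union
    (Set.finite_singleton (0 : ℝ)).finite_subsets).subset ?_
  rintro _ ⟨x, ⟨n, -, hx⟩, rfl⟩
  rcases le_or_gt n ⌊D⌋₊ with hn | hn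
  · refine Or.inl ⟨x, ?_, rfl⟩
    rcases hx with rfl | rfl
    exacts [Or.inl ⟨n, hn, rfl⟩, Or.inr ⟨n, hn, rfl⟩]
  · exact Or.inr (Lam_patch_subset_zero hx (Nat.lt_of_floor_lt hn))

theorem lam_unifDiscrete_not_relDense_flc :
    (∃ r : ℝ, 0 < r ∧ ∀ x y : ℝ, x ∈ Lam → y ∈ Lam → x ≠ y → r ≤ |x - y|) ∧
    (¬ ∃ R : ℝ, 0 < R ∧ ∀ x : ℝ, (Lam ∩ Metric.closedBall x R).Nonempty) ∧
    (∀ D : ℝ, 0 < D → (patchesLam D).Finite) := by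
  refine ⟨⟨1, one_pos, ?_⟩, ?_, fun D _ => patchesLam_finite D⟩
  · rintro x y ⟨n, hn, hx⟩ ⟨m, -, hy⟩ hxy
    exact le_trans (by exact_mod_cast hn) (le_abs_sub_of_eq_pm_geomE hx hy hxy)
  · rintro ⟨R, -, hdense⟩
    obtain ⟨c, hc⟩ := exists_Lam_inter_closedBall_eq_empty R
    exact (hdense c).ne_empty hc
end
end
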